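/- Let a, b ∈ ℝ. There is a 5-dimensional real Lie algebra 𝔤 with basis e₁,...,e₅ and dual basis e¹,...,e⁵ whose Chevalley–Eilenberg differentials satisfy (writing e^{ij} for eⁱ∧eʲ): de¹ = de² = 0, de³ = a e^{13} + b e^{14} − b e^{23} + a e^{24} − (a² + b²) e^{25}, de⁴ = b e^{13} − a e^{14} − (a² + b²) e^{15} + a e^{23} + b e^{24}, de⁵ = −2e^{14} − 2e^{23} (i.e., the bracket determined by these equations satisfies the Jacobi identity). Moreover, 𝔤 is solvable, the quadruplet η = e⁵, ω₁ = e^{12} + e^{34}, ω₂ = e^{13} − e^{24}, ω₃ = e^{14} + e^{23} is a hypo-contact structure on 𝔤; if a = b = 0 then 𝔤 is isomorphic to the nilpotent Lie algebra 𝔥₁, while if (a, b) ≠ (0, 0) then 𝔤 is isomorphic to 𝔥₄. -/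

import Mathlib

noncomputable section

/-- Chevalley–Eilenberg differential of a 1-form on a Lie algebra. -/
def dOne {V : Type*} [LieRing V] [LieAlgebra ℝ V] (α : V → ℝ) (x y : V) : ℝ :=
  -α ⁅x, y⁆

/-- Chevalley–Eilenberg differential of a 2-form on a Lie algebra. -/
def dTwo {V : Type*} [LieRing V] [LieAlgebra ℝ V] (ω : V → V → ℝ) (x y z : V) : ℝ :=
  -ω ⁅x, y⁆ z + ω ⁅x, z⁆ y - ω ⁅y, z⁆ x

/-- Chevalley–Eilenberg differential of a 3-form on a Lie algebra. -/
def dThree {V : Type*} [LieRing V] [LieAlgebra ℝ V] (σ : V → V → V → ℝ)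
    (x y z w : V) : ℝ :=
  -σ ⁅x, y⁆ z w + σ ⁅x, z⁆ y w - σ ⁅x, w⁆ y z
    - σ ⁅y, z⁆ x w + σ ⁅y, w⁆ x z - σ ⁅z, w⁆ x y

/-- Wedge product of two 1-forms, as an alternating bilinear map. -/
def wedge1 {V : Type*} [LieRing V] [LieAlgebra ℝ V] (α β : V →ₗ[ℝ] ℝ) :
    V →ₗ[ℝ] V →ₗ[ℝ] ℝ :=
  LinearMap.mk₂ ℝ (fun x y => α x * β y - α y * β x)
    (fun m₁ m₂ n => by simp [map_add]; ring)
    (fun c m n => by simp [map_smul, smul_eq_mul]; ring)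
    (fun m n₁ n₂ => by simp [map_add]; ring)
    (fun c m n => by simp [map_smul, smul_eq_mul]; ring)

/-- Wedge product of a 1-form and a 2-form. -/
def wedge12 {V : Type*} (α : V → ℝ) (ω : V → V → ℝ) (x y z : V) : ℝ :=
  α x * ω y z - α y * ω x z + α z * ω x y

/-- Wedge product of two 2-forms. -/
def wedge22 {V : Type*} (ω τ : V → V → ℝ) (x y z w : V) : ℝ :=
  ω x y * τ z w - ω x z * τ y w + ω x w * τ y z
    + ω y z * τ x w - ω y w * τ x z + ω z w * τ x y

/-- Wedge product of a 4-form and a 1-form. -/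
def wedge41 {V : Type*} (v : V → V → V → V → ℝ) (α : V → ℝ)
    (x₀ x₁ x₂ x₃ x₄ : V) : ℝ :=
  α x₀ * v x₁ x₂ x₃ x₄ - α x₁ * v x₀ x₂ x₃ x₄ + α x₂ * v x₀ x₁ x₃ x₄
    - α x₃ * v x₀ x₁ x₂ x₄ + α x₄ * v x₀ x₁ x₂ x₃

/-- An SU(2)-structure on a 5-dimensional real Lie algebra. -/
structure IsSU2Structure {V : Type*} [LieRing V] [LieAlgebra ℝ V]
    (η : V →ₗ[ℝ] ℝ) (ω₁ ω₂ ω₃ : V →ₗ[ℝ] V →ₗ[ℝ] ℝ) : Prop where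
  alt1 : ∀ x, ω₁ x x = 0
  alt2 : ∀ x, ω₂ x x = 0
  alt3 : ∀ x, ω₃ x x = 0
  vol : ∃ v : V → V → V → V → ℝ,
    wedge22 (fun a b => ω₁ a b) (fun a b => ω₁ a b) = v ∧
    wedge22 (fun a b => ω₂ a b) (fun a b => ω₂ a b) = v ∧
    wedge22 (fun a b => ω₃ a b) (fun a b => ω₃ a b) = v ∧
    wedge22 (fun a b => ω₁ a b) (fun a b => ω₂ a b) = (fun _ _ _ _ => 0) ∧
    wedge22 (fun a b => ω₁ a b) (fun a b => ω₃ a b) = (fun _ _ _ _ => 0) ∧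
    wedge22 (fun a b => ω₂ a b) (fun a b => ω₃ a b) = (fun _ _ _ _ => 0) ∧
    wedge41 v (fun x => η x) ≠ (fun _ _ _ _ _ => 0)
  compat : ∀ X Y : V, (∀ z, ω₃ X z = ω₁ Y z) → 0 ≤ ω₂ X Y

/-- A hypo-contact structure on a 5-dimensional real Lie algebra. -/
structure IsHypoContact {V : Type*} [LieRing V] [LieAlgebra ℝ V]
    (η : V →ₗ[ℝ] ℝ) (ω₁ ω₂ ω₃ : V →ₗ[ℝ] V →ₗ[ℝ] ℝ)
    extends IsSU2Structure η ω₁ ω₂ ω₃ : Prop where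
  contact : ∀ x y, dOne (fun z => η z) x y = -2 * ω₃ x y
  closed1 : ∀ x y z w, dThree (wedge12 (fun z => η z) (fun a b => ω₁ a b)) x y z w = 0
  closed2 : ∀ x y z w, dThree (wedge12 (fun z => η z) (fun a b => ω₂ a b)) x y z w = 0

/-- The Lie algebra `𝔥₁`. -/
def IsH1 (V : Type*) [LieRing V] [LieAlgebra ℝ V] : Prop :=
  ∃ X : Module.Basis (Fin 5) ℝ V,
    ⁅X 0, X 1⁆ = 0 ∧ ⁅X 0, X 2⁆ = 0 ∧ ⁅X 0, X 3⁆ = X 4 ∧ ⁅X 0, X 4⁆ = 0 ∧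
    ⁅X 1, X 2⁆ = X 4 ∧ ⁅X 1, X 3⁆ = 0 ∧ ⁅X 1, X 4⁆ = 0 ∧
    ⁅X 2, X 3⁆ = 0 ∧ ⁅X 2, X 4⁆ = 0 ∧ ⁅X 3, X 4⁆ = 0

/-- The Lie algebra `𝔥₂`. -/
def IsH2 (V : Type*) [LieRing V] [LieAlgebra ℝ V] : Prop :=
  ∃ X : Module.Basis (Fin 5) ℝ V,
    ⁅X 0, X 1⁆ = 0 ∧ ⁅X 0, X 2⁆ = 0 ∧ ⁅X 0, X 3⁆ = 0 ∧ ⁅X 0, X 4⁆ = (2 : ℝ) • X 0 ∧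
    ⁅X 1, X 2⁆ = X 0 ∧ ⁅X 1, X 3⁆ = 0 ∧ ⁅X 1, X 4⁆ = X 1 ∧
    ⁅X 2, X 3⁆ = 0 ∧ ⁅X 2, X 4⁆ = X 2 ∧ ⁅X 3, X 4⁆ = (-3 : ℝ) • X 3

/-- The Lie algebra `𝔥₃`. -/
def IsH3 (V : Type*) [LieRing V] [LieAlgebra ℝ V] : Prop :=
  ∃ X : Module.Basis (Fin 5) ℝ V,
    ⁅X 0, X 1⁆ = 0 ∧ ⁅X 0, X 2⁆ = 0 ∧ ⁅X 0, X 3⁆ = (2 : ℝ) • X 0 ∧ ⁅X 0, X 4⁆ = 0 ∧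
    ⁅X 1, X 2⁆ = X 0 ∧ ⁅X 1, X 3⁆ = X 1 ∧ ⁅X 1, X 4⁆ = -X 2 ∧
    ⁅X 2, X 3⁆ = X 2 ∧ ⁅X 2, X 4⁆ = X 1 ∧ ⁅X 3, X 4⁆ = 0

/-- The Lie algebra `𝔥₄`. -/
def IsH4 (V : Type*) [LieRing V] [LieAlgebra ℝ V] : Prop :=
  ∃ X : Module.Basis (Fin 5) ℝ V,
    ⁅X 0, X 1⁆ = 0 ∧ ⁅X 0, X 2⁆ = 0 ∧ ⁅X 0, X 3⁆ = X 0 ∧ ⁅X 0, X 4⁆ = 0 ∧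
    ⁅X 1, X 2⁆ = 0 ∧ ⁅X 1, X 3⁆ = 0 ∧ ⁅X 1, X 4⁆ = X 1 ∧
    ⁅X 2, X 3⁆ = -X 2 ∧ ⁅X 2, X 4⁆ = -X 2 ∧ ⁅X 3, X 4⁆ = 0

/-- The Lie algebra `𝔥₅`. -/
def IsH5 (V : Type*) [LieRing V] [LieAlgebra ℝ V] : Prop :=
  ∃ X : Module.Basis (Fin 5) ℝ V,
    ⁅X 0, X 1⁆ = 0 ∧ ⁅X 0, X 2⁆ = 0 ∧ ⁅X 0, X 3⁆ = 0 ∧ ⁅X 0, X 4⁆ = X 0 ∧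
    ⁅X 1, X 2⁆ = 0 ∧ ⁅X 1, X 3⁆ = X 0 ∧ ⁅X 1, X 4⁆ = 0 ∧
    ⁅X 2, X 3⁆ = X 1 ∧ ⁅X 2, X 4⁆ = -X 2 ∧ ⁅X 3, X 4⁆ = X 3

/-- `e^{ij}`, the wedge of the `i`-th and `j`-th dual basis 1-forms. -/
def bw {V : Type*} [LieRing V] [LieAlgebra ℝ V] (e : Module.Basis (Fin 5) ℝ V) (i j : Fin 5) :
    V →ₗ[ℝ] V →ₗ[ℝ] ℝ :=
  wedge1 (e.coord i) (e.coord j)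

/-- The content of Statement 6: structure equations, solvability, hypo-contact structure
and the isomorphism type, for a Lie algebra `V`. -/
def GoodLieAlgebra6 (a b : ℝ) (V : Type) [LieRing V] [LieAlgebra ℝ V] : Prop :=
  LieAlgebra.IsSolvable V ∧
  ∃ e : Module.Basis (Fin 5) ℝ V,
      (∀ x y : _, dOne (⇑(e.coord 0)) x y = 0) ∧
      (∀ x y : _, dOne (⇑(e.coord 1)) x y = 0) ∧
      (∀ x y : _, dOne (⇑(e.coord 2)) x y = (a) * bw e 0 2 x y + (b) * bw e 0 3 x y + (-b) * bw e 1 2 x y + (a) * bw e 1 3 x y + (-(a^2+b^2)) * bw e 1 4 x y) ∧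
      (∀ x y : _, dOne (⇑(e.coord 3)) x y = (b) * bw e 0 2 x y + (-a) * bw e 0 3 x y + (-(a^2+b^2)) * bw e 0 4 x y + (a) * bw e 1 2 x y + (b) * bw e 1 3 x y) ∧
      (∀ x y : _, dOne (⇑(e.coord 4)) x y = (-2) * bw e 0 3 x y + (-2) * bw e 1 2 x y) ∧
      IsHypoContact (e.coord 4) (bw e 0 1 + bw e 2 3) (bw e 0 2 - bw e 1 3) (bw e 0 3 + bw e 1 2) ∧
      ((a = 0 ∧ b = 0) → IsH1 V) ∧ (¬ (a = 0 ∧ b = 0) → IsH4 V)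


/-!
The algebra is `ℝ² ⋉ ℝ³`: `e₁, e₂` span an abelian subalgebra acting on the abelian ideal
spanned by `e₃, e₄, e₅`, which contains all brackets. Hence it is solvable, and the structure
equations and the hypo-contact conditions are identities in coordinates. For `a = b = 0`,
rescaling `e₅` by `2` gives `𝔥₁`.

Otherwise, identify `span(e₃, e₄)` with `ℂ`. The vector `z + e₅` is a common eigenvector of
`ad e₁` and `ad e₂` as soon as `z ≠ 0` and `z² = -i (a + ib) z̄`; the solutions are `z, ωz, ω̄z`
for a primitive cube root of unity `ω`, and the weight of `u.re e₁ + u.im e₂` on `z + e₅`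
is `2 Im (u z)`. The three weights sum to zero and any two are independent, which is the weight
pattern of `𝔥₄`: the dual elements of `span(e₁, e₂)` together with the three eigenvectors form
a basis of type `𝔥₄`.
-/

lemma LieAlgebra.isSolvable_of_derivedSeries_one_le {R L : Type*} [CommRing R] [LieRing L]
    [LieAlgebra R L] (I : LieIdeal R L) (hI : ⁅I, I⁆ = ⊥)
    (h : LieAlgebra.derivedSeries R L 1 ≤ I) : LieAlgebra.IsSolvable L := by
  refine LieAlgebra.IsSolvable.mk (R := R) (k := 2) (eq_bot_iff.2 ?_)
  rw [← hI]
  change LieAlgebra.derivedSeriesOfIdeal R L (1 + 1) ⊤ ≤ _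
  rw [LieAlgebra.derivedSeriesOfIdeal_add, LieAlgebra.derivedSeriesOfIdeal_succ,
    LieAlgebra.derivedSeriesOfIdeal_zero]
  exact LieSubmodule.mono_lie h h

section H4

variable {L : Type*} [LieRing L]

def H4Relations (X : Fin 5 → L) : Prop :=
  ⁅X 0, X 1⁆ = 0 ∧ ⁅X 0, X 2⁆ = 0 ∧ ⁅X 0, X 3⁆ = X 0 ∧ ⁅X 0, X 4⁆ = 0 ∧
    ⁅X 1, X 2⁆ = 0 ∧ ⁅X 1, X 3⁆ = 0 ∧ ⁅X 1, X 4⁆ = X 1 ∧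
    ⁅X 2, X 3⁆ = -X 2 ∧ ⁅X 2, X 4⁆ = -X 2 ∧ ⁅X 3, X 4⁆ = 0

variable {K : Type*} [Field K] [LieAlgebra K L] {X : Fin 5 → L}

-- Bracketing a vanishing combination with `X 3` and `X 4` isolates the coefficients of the weight
-- vectors `X 0, X 1, X 2`; bracketing the rest with `X 0` and `X 1` isolates those of `X 3, X 4`.
lemma H4Relations.linearIndependent (hX : H4Relations X) (h0 : X 0 ≠ 0) (h1 : X 1 ≠ 0)
    (h2 : X 2 ≠ 0) : LinearIndependent K X := by
  obtain ⟨-, -, h03, h04, -, h13, h14, h23, h24, h34⟩ := hX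
  have h43 : ⁅X 4, X 3⁆ = 0 := by rw [← lie_skew, h34, neg_zero]
  rw [Fintype.linearIndependent_iff]
  intro g hg
  rw [Fin.sum_univ_five] at hg
  have hg3 := congrArg (⁅·, X 3⁆) hg
  have hg4 := congrArg (⁅·, X 4⁆) hg
  simp only [add_lie, smul_lie, zero_lie, lie_self, h03, h13, h23, h04, h14, h24, h34, h43,
    smul_zero, add_zero, zero_add, smul_neg] at hg3 hg4
  have hg34 := congrArg (⁅·, X 4⁆) hg3
  simp only [add_lie, neg_lie, smul_lie, zero_lie, h04, h24, smul_zero, smul_neg, neg_neg,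
    zero_add] at hg34
  have g2 : g 2 = 0 := (smul_eq_zero.1 hg34).resolve_right h2
  simp only [g2, zero_smul, neg_zero, add_zero] at hg3 hg4
  have g0 : g 0 = 0 := (smul_eq_zero.1 hg3).resolve_right h0
  have g1 : g 1 = 0 := (smul_eq_zero.1 hg4).resolve_right h1
  simp only [g0, g1, g2, zero_smul, zero_add] at hg
  have hg0 := congrArg (⁅X 0, ·⁆) hg
  have hg1 := congrArg (⁅X 1, ·⁆) hg
  simp only [lie_add, lie_smul, lie_zero, h03, h04, h13, h14, smul_zero, add_zero,
    zero_add] at hg0 hg1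
  have g3 : g 3 = 0 := (smul_eq_zero.1 hg0).resolve_right h0
  have g4 : g 4 = 0 := (smul_eq_zero.1 hg1).resolve_right h1
  intro i
  fin_cases i <;> assumption

lemma isH4_of_h4Relations [LieAlgebra ℝ L] [FiniteDimensional ℝ L] (hL : Module.finrank ℝ L = 5)
    (hX : H4Relations X) (h0 : X 0 ≠ 0) (h1 : X 1 ≠ 0) (h2 : X 2 ≠ 0) : IsH4 L :=
  ⟨basisOfLinearIndependentOfCardEqFinrank (hX.linearIndependent h0 h1 h2) (by simp [hL]),
    by rw [coe_basisOfLinearIndependentOfCardEqFinrank]; exact hX⟩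

end H4

namespace HypoContactFamily

open Module

-- Read off from the structure equations through `de^k(x, y) = -e^k([x, y])`.
def bracket (a b : ℝ) (x y : Fin 5 → ℝ) : Fin 5 → ℝ :=
  ![0, 0,
    -a * (x 0 * y 2 - x 2 * y 0) - b * (x 0 * y 3 - x 3 * y 0) + b * (x 1 * y 2 - x 2 * y 1)
      - a * (x 1 * y 3 - x 3 * y 1) + (a ^ 2 + b ^ 2) * (x 1 * y 4 - x 4 * y 1),
    -b * (x 0 * y 2 - x 2 * y 0) + a * (x 0 * y 3 - x 3 * y 0)
      + (a ^ 2 + b ^ 2) * (x 0 * y 4 - x 4 * y 0) - a * (x 1 * y 2 - x 2 * y 1)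
      - b * (x 1 * y 3 - x 3 * y 1),
    2 * (x 0 * y 3 - x 3 * y 0) + 2 * (x 1 * y 2 - x 2 * y 1)]

section Bracket

variable (a b : ℝ) (x y z : Fin 5 → ℝ)

lemma bracket_add_left : bracket a b (x + y) z = bracket a b x z + bracket a b y z := by
  funext k; fin_cases k <;> simp [bracket] <;> ring

lemma bracket_add_right : bracket a b x (y + z) = bracket a b x y + bracket a b x z := by
  funext k; fin_cases k <;> simp [bracket] <;> ring

lemma bracket_smul_right (t : ℝ) : bracket a b x (t • y) = t • bracket a b x y := by
  funext k; fin_cases k <;> simp [bracket] <;> ring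

lemma bracket_self : bracket a b x x = 0 := by
  funext k; fin_cases k <;> simp [bracket] <;> ring

lemma bracket_leibniz : bracket a b x (bracket a b y z) =
    bracket a b (bracket a b x y) z + bracket a b y (bracket a b x z) := by
  funext k; fin_cases k <;> simp [bracket] <;> ring

end Bracket

-- A type synonym, so that this bracket does not clash with the pointwise one on `Fin 5 → ℝ`.
def L (_a _b : ℝ) : Type := Fin 5 → ℝ

variable {a b : ℝ}

instance : AddCommGroup (L a b) := inferInstanceAs (AddCommGroup (Fin 5 → ℝ))

instance : Module ℝ (L a b) := inferInstanceAs (Module ℝ (Fin 5 → ℝ))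

instance : LieRing (L a b) where
  bracket := bracket a b
  add_lie := bracket_add_left a b
  lie_add := bracket_add_right a b
  lie_self := bracket_self a b
  leibniz_lie := bracket_leibniz a b

instance : LieAlgebra ℝ (L a b) where
  lie_smul t x y := bracket_smul_right a b x y t

lemma lie_apply (x y : L a b) (i : Fin 5) : ⁅x, y⁆ i = bracket a b x y i := rfl

@[simp] lemma zero_apply (i : Fin 5) : (0 : L a b) i = 0 := rfl
@[simp] lemma add_apply (x y : L a b) (i : Fin 5) : (x + y) i = x i + y i := rfl
@[simp] lemma smul_apply (t : ℝ) (x : L a b) (i : Fin 5) : (t • x) i = t * x i := rfl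

instance : FiniteDimensional ℝ (L a b) := inferInstanceAs (FiniteDimensional ℝ (Fin 5 → ℝ))

lemma finrank_eq : finrank ℝ (L a b) = 5 := Module.finrank_fin_fun ℝ

variable (a b) in
def stdBasis : Basis (Fin 5) ℝ (L a b) := Pi.basisFun ℝ (Fin 5)

@[simp] lemma stdBasis_repr (x : L a b) (i : Fin 5) : (stdBasis a b).repr x i = x i :=
  Pi.basisFun_repr (R := ℝ) (η := Fin 5) x i

@[simp] lemma stdBasis_coord (i : Fin 5) (x : L a b) : (stdBasis a b).coord i x = x i :=
  stdBasis_repr x i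

@[simp] lemma stdBasis_apply (i j : Fin 5) : stdBasis a b i j = if i = j then 1 else 0 := by
  rw [← stdBasis_repr (stdBasis a b i), Basis.repr_self, Finsupp.single_apply]

lemma bw_stdBasis (i j : Fin 5) (x y : L a b) :
    bw (stdBasis a b) i j x y = x i * y j - x j * y i := by
  simp [bw, wedge1, mul_comm]

lemma structure_equations :
    (∀ x y : L a b, dOne ⇑((stdBasis a b).coord 0) x y = 0) ∧
    (∀ x y : L a b, dOne ⇑((stdBasis a b).coord 1) x y = 0) ∧
    (∀ x y : L a b, dOne ⇑((stdBasis a b).coord 2) x y =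
      a * bw (stdBasis a b) 0 2 x y + b * bw (stdBasis a b) 0 3 x y
        + (-b) * bw (stdBasis a b) 1 2 x y + a * bw (stdBasis a b) 1 3 x y
        + (-(a ^ 2 + b ^ 2)) * bw (stdBasis a b) 1 4 x y) ∧
    (∀ x y : L a b, dOne ⇑((stdBasis a b).coord 3) x y =
      b * bw (stdBasis a b) 0 2 x y + (-a) * bw (stdBasis a b) 0 3 x y
        + (-(a ^ 2 + b ^ 2)) * bw (stdBasis a b) 0 4 x y + a * bw (stdBasis a b) 1 2 x y
        + b * bw (stdBasis a b) 1 3 x y) ∧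
    (∀ x y : L a b, dOne ⇑((stdBasis a b).coord 4) x y =
      (-2) * bw (stdBasis a b) 0 3 x y + (-2) * bw (stdBasis a b) 1 2 x y) := by
  refine ⟨?_, ?_, ?_, ?_, ?_⟩ <;>
  · intro x y
    simp only [dOne, stdBasis_coord, bw_stdBasis]
    simp [lie_apply, bracket]
    try ring

lemma isSU2Structure : IsSU2Structure ((stdBasis a b).coord 4)
    (bw (stdBasis a b) 0 1 + bw (stdBasis a b) 2 3) (bw (stdBasis a b) 0 2 - bw (stdBasis a b) 1 3)
    (bw (stdBasis a b) 0 3 + bw (stdBasis a b) 1 2) where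
  alt1 x := by simp [bw_stdBasis]; ring
  alt2 x := by simp [bw_stdBasis]; ring
  alt3 x := by simp [bw_stdBasis]; ring
  vol := by
    refine ⟨_, rfl, ?_, ?_, ?_, ?_, ?_, ?_⟩
    any_goals
      funext x y z w
      simp only [wedge22, LinearMap.add_apply, LinearMap.sub_apply, bw_stdBasis]
      ring
    intro h
    have := congrFun (congrFun (congrFun (congrFun (congrFun h
      (stdBasis a b 0)) (stdBasis a b 1)) (stdBasis a b 2)) (stdBasis a b 3)) (stdBasis a b 4)
    simp [wedge41, wedge22, bw_stdBasis] at this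
  compat X Y h := by
    have h0 := h (stdBasis a b 0); have h1 := h (stdBasis a b 1)
    have h2 := h (stdBasis a b 2); have h3 := h (stdBasis a b 3)
    simp [bw_stdBasis] at h0 h1 h2 h3 ⊢
    rw [← h0, ← h1, ← h3, show Y 3 = -X 1 by linarith]
    nlinarith [sq_nonneg (X 0), sq_nonneg (X 1), sq_nonneg (X 2), sq_nonneg (X 3)]

lemma isHypoContact : IsHypoContact ((stdBasis a b).coord 4)
    (bw (stdBasis a b) 0 1 + bw (stdBasis a b) 2 3) (bw (stdBasis a b) 0 2 - bw (stdBasis a b) 1 3)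
    (bw (stdBasis a b) 0 3 + bw (stdBasis a b) 1 2) where
  toIsSU2Structure := isSU2Structure
  contact x y := by
    simp only [dOne, stdBasis_coord, bw_stdBasis, LinearMap.add_apply]
    simp [lie_apply, bracket]; ring
  closed1 x y z w := by
    simp only [dThree, wedge12, stdBasis_coord, bw_stdBasis, LinearMap.add_apply]
    simp [lie_apply, bracket]; ring
  closed2 x y z w := by
    simp only [dThree, wedge12, stdBasis_coord, bw_stdBasis, LinearMap.sub_apply]
    simp [lie_apply, bracket]; ring

def abelianIdeal (a b : ℝ) : LieIdeal ℝ (L a b) where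
  carrier := {x | x 0 = 0 ∧ x 1 = 0}
  add_mem' := by
    rintro x y ⟨hx0, hx1⟩ ⟨hy0, hy1⟩
    simp [hx0, hx1, hy0, hy1]
  zero_mem' := ⟨rfl, rfl⟩
  smul_mem' := by
    rintro t x ⟨hx0, hx1⟩
    simp [hx0, hx1]
  lie_mem _ := ⟨rfl, rfl⟩

lemma lie_abelianIdeal_eq_bot : ⁅abelianIdeal a b, abelianIdeal a b⁆ = ⊥ := by
  rw [LieSubmodule.lie_eq_bot_iff]
  rintro x ⟨hx0, hx1⟩ y ⟨hy0, hy1⟩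
  funext k
  fin_cases k <;> simp [lie_apply, bracket, hx0, hx1, hy0, hy1]

lemma isSolvable : LieAlgebra.IsSolvable (L a b) := by
  refine LieAlgebra.isSolvable_of_derivedSeries_one_le (abelianIdeal a b)
    lie_abelianIdeal_eq_bot ?_
  rw [LieAlgebra.derivedSeries_def, LieAlgebra.derivedSeriesOfIdeal_succ,
    LieSubmodule.lieIdeal_oper_eq_span, LieSubmodule.lieSpan_le]
  rintro _ ⟨x, y, rfl⟩
  exact ⟨rfl, rfl⟩

lemma isH1 : IsH1 (L 0 0) := by
  refine ⟨(stdBasis 0 0).isUnitSMul (w := ![1, 1, 1, 1, 2])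
    (fun i => by fin_cases i <;> norm_num), ?_⟩
  refine ⟨?_, ?_, ?_, ?_, ?_, ?_, ?_, ?_, ?_, ?_⟩ <;>
  · funext k
    fin_cases k <;> simp [Basis.isUnitSMul_apply, lie_apply, bracket]

section Weights

open Complex ComplexConjugate

variable {z : ℂ}

def weightVector (z : ℂ) : L a b := ![0, 0, z.re, z.im, 1]

def toralVector (u : ℂ) : L a b := ![u.re, u.im, 0, 0, 0]

def IsWeightParam (a b : ℝ) (z : ℂ) : Prop := z ≠ 0 ∧ z ^ 2 = -I * (a + b * I) * conj z

lemma IsWeightParam.normSq_eq (hz : IsWeightParam a b z) : normSq z = a ^ 2 + b ^ 2 := by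
  have h := congrArg normSq hz.2
  simp only [map_pow, map_mul, normSq_neg, normSq_I, normSq_conj, normSq_add_mul_I] at h
  have hz0 : normSq z ≠ 0 := normSq_eq_zero.not.2 hz.1
  exact mul_right_cancel₀ hz0 (by linear_combination h)

lemma IsWeightParam.mul (hz : IsWeightParam a b z) {ζ : ℂ} (hζ0 : ζ ≠ 0)
    (hζ : ζ ^ 2 = conj ζ) : IsWeightParam a b (ζ * z) :=
  ⟨mul_ne_zero hζ0 hz.1, by rw [map_mul, mul_pow, hz.2, hζ]; ring⟩

-- If `ζ ^ 3 = -I * (a + b * I)` then `normSq ζ * ζ` is a weight parameter.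
lemma exists_isWeightParam (hab : ¬(a = 0 ∧ b = 0)) : ∃ z, IsWeightParam a b z := by
  have hw : (a + b * I : ℂ) ≠ 0 := by
    contrapose! hab
    simpa using congrArg (fun w => (w.re, w.im)) hab
  obtain ⟨ζ, hζ⟩ := IsAlgClosed.exists_pow_nat_eq (-I * (a + b * I)) (n := 3) (by norm_num)
  have hζ0 : ζ ≠ 0 := by
    rintro rfl
    exact hw (by simpa using hζ.symm)
  refine ⟨normSq ζ * ζ, mul_ne_zero (by simpa using hζ0) hζ0, ?_⟩
  rw [map_mul, conj_ofReal, ← hζ]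
  linear_combination (-(normSq ζ * ζ ^ 2) : ℂ) * mul_conj ζ

lemma weightVector_ne_zero (z : ℂ) : (weightVector z : L a b) ≠ 0 :=
  fun h => one_ne_zero (congrFun h 4)

lemma lie_weightVector_weightVector (z z' : ℂ) :
    ⁅(weightVector z : L a b), (weightVector z' : L a b)⁆ = 0 := by
  funext k; rw [lie_apply]; fin_cases k <;> simp [bracket, weightVector]

lemma lie_toralVector_toralVector (u u' : ℂ) :
    ⁅(toralVector u : L a b), (toralVector u' : L a b)⁆ = 0 := by
  funext k; rw [lie_apply]; fin_cases k <;> simp [bracket, toralVector]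

lemma lie_weightVector_toralVector (hz : IsWeightParam a b z) (u : ℂ) :
    ⁅(weightVector z : L a b), (toralVector u : L a b)⁆ = (-2 * (u * z).im) • weightVector z := by
  have hre := congrArg re hz.2
  have him := congrArg im hz.2
  have hc := hz.normSq_eq
  simp [sq, normSq_apply] at hre him hc
  funext k
  rw [lie_apply, smul_apply]
  fin_cases k <;> simp [bracket, weightVector, toralVector]
  · linear_combination u.re * him + u.im * (hre + hc)
  · linear_combination u.re * (hc - hre) + u.im * him
  · ring

def cubeRootOfUnity : ℂ := ⟨-1 / 2, √3 / 2⟩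

@[simp] lemma cubeRootOfUnity_re : cubeRootOfUnity.re = -1 / 2 := rfl

@[simp] lemma cubeRootOfUnity_im : cubeRootOfUnity.im = √3 / 2 := rfl

lemma cubeRootOfUnity_sq : cubeRootOfUnity ^ 2 = conj cubeRootOfUnity := by
  apply Complex.ext
  · simp only [sq, mul_re, cubeRootOfUnity_re, cubeRootOfUnity_im, conj_re]
    linear_combination (-1 / 4 : ℝ) * Real.mul_self_sqrt (show (0 : ℝ) ≤ 3 by norm_num)
  · simp [sq]; ring

lemma cubeRootOfUnity_ne_zero : cubeRootOfUnity ≠ 0 := by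
  simp [Complex.ext_iff]

-- Scaled so that `toralVector (dualParam z ζ)` has weight `2/√3 · Im (conj ζ * ξ)` on
-- `weightVector (ξ * z)`, which is `0` or `±1` when `ζ, ξ` are sixth roots of unity.
def dualParam (z ζ : ℂ) : ℂ := ((√3 * normSq z)⁻¹ : ℝ) * conj (ζ * z)

lemma dualParam_mul (hz : z ≠ 0) (ζ ξ : ℂ) :
    dualParam z ζ * (ξ * z) = ((√3)⁻¹ : ℝ) * (conj ζ * ξ) := by
  have hn : (normSq z : ℂ) ≠ 0 := by simpa using hz
  have h3 : ((√3 : ℝ) : ℂ) ≠ 0 := by simp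
  calc dualParam z ζ * (ξ * z) = ((√3 * normSq z)⁻¹ : ℝ) * (z * conj z) * (conj ζ * ξ) := by
        rw [dualParam, map_mul]; ring
    _ = ((√3)⁻¹ : ℝ) * (conj ζ * ξ) := by
        rw [mul_conj]; push_cast; field_simp

lemma lie_weightVector_toralVector_dualParam (hz : z ≠ 0) {ξ : ℂ}
    (hξ : IsWeightParam a b (ξ * z)) (ζ : ℂ) {c : ℝ} (hc : -2 / √3 * (conj ζ * ξ).im = c) :
    ⁅(weightVector (ξ * z) : L a b), (toralVector (dualParam z ζ) : L a b)⁆ =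
      c • weightVector (ξ * z) := by
  rw [lie_weightVector_toralVector hξ, dualParam_mul hz, im_ofReal_mul, ← hc]
  ring_nf

lemma isH4 (hab : ¬(a = 0 ∧ b = 0)) : IsH4 (L a b) := by
  obtain ⟨z, hz⟩ := exists_isWeightParam hab
  set ω := cubeRootOfUnity
  have hω : IsWeightParam a b (ω * z) := hz.mul cubeRootOfUnity_ne_zero cubeRootOfUnity_sq
  have hω' : IsWeightParam a b (conj ω * z) := hz.mul (by simpa using cubeRootOfUnity_ne_zero)
    (by rw [← map_pow, cubeRootOfUnity_sq, conj_conj])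
  have lie_eq := @lie_weightVector_toralVector_dualParam a b z hz.1
  have h1 : IsWeightParam a b (1 * z) := by rwa [one_mul]
  refine isH4_of_h4Relations finrank_eq (X := ![weightVector (1 * z), weightVector (ω * z),
    weightVector (conj ω * z), toralVector (dualParam z ω), toralVector (dualParam z (-1))])
    ⟨?_, ?_, ?_, ?_, ?_, ?_, ?_, ?_, ?_, ?_⟩ (weightVector_ne_zero _) (weightVector_ne_zero _)
    (weightVector_ne_zero _)
  · exact lie_weightVector_weightVector _ _
  · exact lie_weightVector_weightVector _ _
  · exact (lie_eq h1 ω (by simp [ω]; field_simp)).trans (one_smul ℝ _)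
  · exact (lie_eq h1 (-1) (by simp)).trans (zero_smul ℝ _)
  · exact lie_weightVector_weightVector _ _
  · exact (lie_eq hω ω (by simp [mul_comm, mul_conj])).trans (zero_smul ℝ _)
  · exact (lie_eq hω (-1) (by simp [ω]; field_simp)).trans (one_smul ℝ _)
  · exact (lie_eq hω' ω (by simp [ω, mul_im]; field_simp; ring)).trans (neg_one_smul ℝ _)
  · exact (lie_eq hω' (-1) (by simp [ω]; field_simp)).trans (neg_one_smul ℝ _)
  · exact lie_toralVector_toralVector _ _

end Weights

end HypoContactFamily

theorem exists_good_lie_algebra6 (a b : ℝ) :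
    ∃ (V : Type) (i₁ : LieRing V) (i₂ : @LieAlgebra ℝ V _ i₁),
      @GoodLieAlgebra6 a b V i₁ i₂ := by
  obtain ⟨de₁, de₂, de₃, de₄, de₅⟩ := HypoContactFamily.structure_equations (a := a) (b := b)
  refine ⟨HypoContactFamily.L a b, inferInstance, inferInstance, HypoContactFamily.isSolvable,
    HypoContactFamily.stdBasis a b, de₁, de₂, de₃, de₄, de₅, HypoContactFamily.isHypoContact,
    ?_, HypoContactFamily.isH4⟩
  rintro ⟨rfl, rfl⟩
  exact HypoContactFamily.isH1
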